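/- If x = (x_1,…,x_n) is a real root (i.e. x = w(β) for some w ∈ W) with deg(x) ≥ 1 whose coordinates are weakly decreasing, x_1 ≥ x_2 ≥ … ≥ x_n, then deg(s_β(x)) < deg(x). -/

import Mathlib

/-
A real root `x = w β` is a nonnegative or a nonpositive combination `∑ cᵢ αᵢ` of the simple roots
(`α_j = e_{j+1} - e_j` and `β`). This is the usual Coxeter-group argument: `ℓ(w sᵢ) = ℓ(w) ± 1`
by the determinant, and since the form is simply laced, two simple reflections generate a group of
type `A₁ × A₁` or `A₂`, which is all the induction on `ℓ(w)` needs. As `deg` vanishes on the `α_j`,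
`deg x = c_β ≥ 1`, so `x` is positive. Then `2 = (x, x) = ∑ cᵢ (αᵢ, x)`, and sortedness makes
`(α_j, x) = x_{j+1} - x_j ≤ 0`, so `c_β (β, x) ≥ 2`; hence `r(x) = -(β, x) < 0` and
`deg (s_β x) = deg x + r(x) < deg x`.
-/

open Finset

/-- `stdE n m` is the standard basis vector `e_m` (1-based index `m`) of `ℚ^n`. -/
def stdE (n m : ℕ) : Fin n → ℚ := fun j => if (j : ℕ) + 1 = m then 1 else 0

/-- the simple root `α_i = e_{i+1} - e_i` (1-based, for `1 ≤ i ≤ n-1`). -/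
def alphaRoot (n i : ℕ) : Fin n → ℚ := stdE n (i + 1) - stdE n i

/-- the simple root `β = e_1 + ⋯ + e_k`. -/
def betaRoot (n k : ℕ) : Fin n → ℚ := fun j => if (j : ℕ) < k then 1 else 0

/-- the quadratic form `q(x) = Σ x_i² + ((2-k)/k²)(Σ x_i)²`. -/
def qform (n k : ℕ) (x : Fin n → ℚ) : ℚ :=
  (∑ i, (x i) ^ 2) + ((2 - (k : ℚ)) / (k : ℚ) ^ 2) * (∑ i, x i) ^ 2

/-- the inner product obtained as the polarization of `q`. -/
def ip (n k : ℕ) (x y : Fin n → ℚ) : ℚ :=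
  (qform n k (x + y) - qform n k x - qform n k y) / 2

/-- the degree `deg(x) = (x_1 + ⋯ + x_n)/k`. -/
def degv (n k : ℕ) (x : Fin n → ℚ) : ℚ := (∑ i, x i) / (k : ℚ)

/-- `r(x) = x_{k+1} + ⋯ + x_n - 2 deg(x)`. -/
def rco (n k : ℕ) (x : Fin n → ℚ) : ℚ :=
  (∑ i ∈ Finset.univ.filter (fun i : Fin n => k ≤ (i : ℕ)), x i) - 2 * degv n k x

/-- the reflection `s_β : x ↦ x + r(x)·β`. -/
def sBeta (n k : ℕ) (x : Fin n → ℚ) : Fin n → ℚ := x + rco n k x • betaRoot n k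

/-- the map swapping coordinates `a` and `b` (0-based). -/
def sSwap (n : ℕ) (a b : Fin n) (x : Fin n → ℚ) : Fin n → ℚ := x ∘ Equiv.swap a b

/-- The Weyl group: the subgroup of bijections of `ℚ^n` generated by the simple
reflections `s_1, …, s_{n-1}` (as functions: `sSwap` of adjacent coordinates,
0-based) and `s_β` (as a function: `sBeta`). -/
def weyl (n k : ℕ) : Subgroup (Equiv.Perm (Fin n → ℚ)) :=
  Subgroup.closure
    {σ | ⇑σ = sBeta n k ∨ ∃ a b : Fin n, (a : ℕ) + 1 = (b : ℕ) ∧ ⇑σ = sSwap n a b}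

/-- The set of real roots: the orbit `W·β`. -/
def realRoots (n k : ℕ) : Set (Fin n → ℚ) :=
  {x | ∃ σ ∈ weyl n k, σ (betaRoot n k) = x}

/-- `dec x`: the coordinates of `x` rearranged in weakly decreasing order. -/
def dec {n : ℕ} (x : Fin n → ℚ) : Fin n → ℚ := fun i => x (Tuple.sort x i.rev)

open Module

-- A realization of a simply-laced generalized Cartan matrix; the roots need not be independent.
structure SimplyLacedDatum (𝕜 V ι : Type*) [Field 𝕜] [AddCommGroup V] [Module 𝕜 V] where
  form : LinearMap.BilinForm 𝕜 V
  root : ι → V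
  form_comm : ∀ x y, form x y = form y x
  form_root_self : ∀ i, form (root i) (root i) = 2
  form_root_root : ∀ i j, i ≠ j → form (root i) (root j) = 0 ∨ form (root i) (root j) = -1

namespace SimplyLacedDatum

variable {𝕜 V ι : Type*} [Field 𝕜] [AddCommGroup V] [Module 𝕜 V] (P : SimplyLacedDatum 𝕜 V ι)

def refl (i : ι) : V ≃ₗ[𝕜] V := reflection (P.form_root_self i)

lemma refl_apply (i : ι) (x : V) : P.refl i x = x - P.form (P.root i) x • P.root i :=
  reflection_apply _ _

lemma refl_apply_root_self (i : ι) : P.refl i (P.root i) = -P.root i :=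
  reflection_apply_self _

lemma refl_mul_self (i : ι) : P.refl i * P.refl i = 1 :=
  LinearEquiv.ext (involutive_reflection _)

lemma form_refl_refl (i : ι) (x y : V) : P.form (P.refl i x) (P.refl i y) = P.form x y := by
  simp only [refl_apply, map_sub, map_smul, LinearMap.sub_apply, LinearMap.smul_apply,
    smul_eq_mul, P.form_root_self, P.form_comm x (P.root i)]
  ring

lemma refl_mul_self_assoc (i : ι) (w : V ≃ₗ[𝕜] V) : P.refl i * (P.refl i * w) = w := by
  rw [← mul_assoc, refl_mul_self, one_mul]

lemma refl_mul_refl_comm {i j : ι} (h : P.form (P.root i) (P.root j) = 0) :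
    P.refl i * P.refl j = P.refl j * P.refl i := by
  ext x
  simp only [LinearEquiv.mul_apply, refl_apply, map_sub, map_smul, h,
    P.form_comm (P.root j) (P.root i)]
  module

lemma refl_braid {i j : ι} (h : P.form (P.root i) (P.root j) = -1) :
    P.refl i * P.refl j * P.refl i = P.refl j * P.refl i * P.refl j := by
  ext x
  simp only [LinearEquiv.mul_apply, refl_apply, map_sub, map_smul, h,
    P.form_comm (P.root j) (P.root i), P.form_root_self]
  module

lemma det_refl [FiniteDimensional 𝕜 V] (i : ι) : LinearMap.det (P.refl i : V →ₗ[𝕜] V) = -1 := by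
  have : (P.refl i : V →ₗ[𝕜] V) = LinearMap.transvection (P.form (P.root i)) (-P.root i) := by
    ext x
    simp [refl_apply, LinearMap.transvection.apply, sub_eq_add_neg]
  rw [this, LinearMap.transvection.det, map_neg, P.form_root_self]
  norm_num

def wordProd (l : List ι) : V ≃ₗ[𝕜] V := (l.map P.refl).prod

@[simp] lemma wordProd_nil : P.wordProd [] = 1 := rfl

@[simp] lemma wordProd_cons (i : ι) (l : List ι) :
    P.wordProd (i :: l) = P.refl i * P.wordProd l := List.prod_cons

@[simp] lemma wordProd_append (l l' : List ι) :
    P.wordProd (l ++ l') = P.wordProd l * P.wordProd l' := by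
  simp [wordProd]

lemma wordProd_append_singleton (l : List ι) (i : ι) :
    P.wordProd (l ++ [i]) = P.wordProd l * P.refl i := by
  simp

lemma wordProd_reverse (l : List ι) : P.wordProd l.reverse = (P.wordProd l)⁻¹ := by
  induction l with
  | nil => simp
  | cons i l ih =>
    rw [List.reverse_cons, wordProd_append_singleton, ih, wordProd_cons, mul_inv_rev,
      inv_eq_of_mul_eq_one_right (P.refl_mul_self i)]

lemma form_wordProd_wordProd (l : List ι) (x y : V) :
    P.form (P.wordProd l x) (P.wordProd l y) = P.form x y := by
  induction l with
  | nil => rfl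
  | cons i l ih => simp [LinearEquiv.mul_apply, form_refl_refl, ih]

lemma form_apply_root_self {w : V ≃ₗ[𝕜] V} (hw : w ∈ Set.range P.wordProd) (i : ι) :
    P.form (w (P.root i)) (w (P.root i)) = 2 := by
  obtain ⟨l, rfl⟩ := hw
  rw [form_wordProd_wordProd, form_root_self]

lemma det_wordProd [FiniteDimensional 𝕜 V] (l : List ι) :
    LinearEquiv.det (P.wordProd l) = (-1) ^ l.length := by
  induction l with
  | nil => simp
  | cons i l ih =>
    ext
    simp [map_mul, ih, pow_succ', LinearEquiv.coe_det, det_refl]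

-- `sInf ∅ = 0`: the length is meaningful only on `Set.range P.wordProd`.
noncomputable def length (w : V ≃ₗ[𝕜] V) : ℕ := sInf (List.length '' (P.wordProd ⁻¹' {w}))

lemma length_wordProd_le (l : List ι) : P.length (P.wordProd l) ≤ l.length :=
  Nat.sInf_le (Set.mem_image_of_mem _ rfl)

lemma exists_reduced_word {w : V ≃ₗ[𝕜] V} (hw : w ∈ Set.range P.wordProd) :
    ∃ l, P.wordProd l = w ∧ l.length = P.length w := by
  obtain ⟨l, rfl⟩ := hw
  exact Nat.sInf_mem (s := List.length '' (P.wordProd ⁻¹' {P.wordProd l})) ⟨_, l, rfl, rfl⟩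

lemma mul_refl_mem_range {w : V ≃ₗ[𝕜] V} (hw : w ∈ Set.range P.wordProd) (i : ι) :
    w * P.refl i ∈ Set.range P.wordProd := by
  obtain ⟨l, rfl⟩ := hw
  exact ⟨l ++ [i], by simp⟩

lemma length_mul_refl_le {w : V ≃ₗ[𝕜] V} (hw : w ∈ Set.range P.wordProd) (i : ι) :
    P.length (w * P.refl i) ≤ P.length w + 1 := by
  obtain ⟨l, rfl, hl⟩ := P.exists_reduced_word hw
  simpa [hl] using P.length_wordProd_le (l ++ [i])

lemma length_mul_refl_ne [FiniteDimensional 𝕜 V] [CharZero 𝕜] {w : V ≃ₗ[𝕜] V}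
    (hw : w ∈ Set.range P.wordProd) (i : ι) : P.length (w * P.refl i) ≠ P.length w := by
  intro h
  obtain ⟨l, rfl, hl⟩ := P.exists_reduced_word hw
  obtain ⟨l', hl', hl'len⟩ := P.exists_reduced_word (P.mul_refl_mem_range hw i)
  have hdet := congrArg LinearEquiv.det (hl'.trans (P.wordProd_append_singleton l i).symm)
  rw [det_wordProd, det_wordProd, hl'len, h, List.length_append, hl, List.length_singleton,
    pow_succ, left_eq_mul] at hdet
  have : (-1 : 𝕜) = 1 := congrArg Units.val hdet
  norm_num at this

lemma length_mul_refl [FiniteDimensional 𝕜 V] [CharZero 𝕜] {w : V ≃ₗ[𝕜] V}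
    (hw : w ∈ Set.range P.wordProd) (i : ι) :
    P.length (w * P.refl i) = P.length w + 1 ∨ P.length (w * P.refl i) + 1 = P.length w := by
  have h₁ := P.length_mul_refl_le hw i
  have h₂ := P.length_mul_refl_le (P.mul_refl_mem_range hw i) i
  have h₃ := P.length_mul_refl_ne hw i
  rw [mul_assoc, refl_mul_self, mul_one] at h₂
  omega

lemma exists_eq_mul_refl_of_ne_one {w : V ≃ₗ[𝕜] V} (hw : w ∈ Set.range P.wordProd)
    (h : w ≠ 1) :
    ∃ u ∈ Set.range P.wordProd, ∃ t, w = u * P.refl t ∧ P.length u < P.length w := by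
  obtain ⟨l, rfl, hl⟩ := P.exists_reduced_word hw
  obtain rfl | ⟨l, t, rfl⟩ := l.eq_nil_or_concat
  · exact absurd rfl h
  rw [List.concat_eq_append] at hl ⊢
  refine ⟨P.wordProd l, ⟨l, rfl⟩, t, P.wordProd_append_singleton l t, ?_⟩
  rw [← hl, List.length_append, List.length_singleton]
  exact Nat.lt_succ_of_le (P.length_wordProd_le l)

lemma length_lt_of_commute [FiniteDimensional 𝕜 V] [CharZero 𝕜] {u : V ≃ₗ[𝕜] V}
    (hu : u ∈ Set.range P.wordProd) {i t : ι} (h : P.form (P.root t) (P.root i) = 0)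
    (ht : P.length u < P.length (u * P.refl t))
    (hi : P.length (u * P.refl t) < P.length (u * P.refl t * P.refl i)) :
    P.length u < P.length (u * P.refl i) := by
  have key : u * P.refl i * P.refl t = u * P.refl t * P.refl i := by
    rw [mul_assoc, ← P.refl_mul_refl_comm h, mul_assoc]
  have := P.length_mul_refl_le (P.mul_refl_mem_range hu i) t
  rw [key] at this
  rcases P.length_mul_refl hu i with _ | _ <;> omega

lemma length_lt_of_braid [FiniteDimensional 𝕜 V] [CharZero 𝕜] {u : V ≃ₗ[𝕜] V}
    (hu : u ∈ Set.range P.wordProd) {i t : ι} (h : P.form (P.root t) (P.root i) = -1)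
    (ht : P.length u < P.length (u * P.refl t))
    (hi : P.length (u * P.refl t) < P.length (u * P.refl t * P.refl i))
    (hui : P.length (u * P.refl i) < P.length u) :
    P.length (u * P.refl i) < P.length (u * P.refl i * P.refl t) := by
  have hui' := P.mul_refl_mem_range hu i
  have huit := P.mul_refl_mem_range hui' t
  have key : u * P.refl i * P.refl t * P.refl i * P.refl t = u * P.refl t * P.refl i := by
    calc u * P.refl i * P.refl t * P.refl i * P.refl t
        = u * P.refl i * (P.refl t * P.refl i * P.refl t) := by simp only [mul_assoc]
      _ = u * P.refl i * (P.refl i * P.refl t * P.refl i) := by rw [P.refl_braid h]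
      _ = u * P.refl t * P.refl i := by simp only [mul_assoc, refl_mul_self_assoc]
  have h₁ := P.length_mul_refl_le huit i
  have h₂ := P.length_mul_refl_le (P.mul_refl_mem_range huit i) t
  rw [key] at h₂
  rcases P.length_mul_refl hui' t with _ | _ <;> omega

section Positivity

variable [LinearOrder 𝕜] [IsStrictOrderedRing 𝕜]

def posCone : PointedCone 𝕜 V := PointedCone.hull 𝕜 (Set.range P.root)

lemma root_mem_posCone (i : ι) : P.root i ∈ P.posCone :=
  PointedCone.subset_hull (Set.mem_range_self i)

theorem apply_root_mem_posCone [FiniteDimensional 𝕜 V] {w : V ≃ₗ[𝕜] V}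
    (hw : w ∈ Set.range P.wordProd) {i : ι} (hi : P.length w < P.length (w * P.refl i)) :
    w (P.root i) ∈ P.posCone := by
  induction hN : P.length w using Nat.strong_induction_on generalizing w i with
  | _ N ih =>
  subst hN
  by_cases hw1 : w = 1
  · simpa [hw1] using P.root_mem_posCone i
  obtain ⟨u, hu, t, rfl, hut⟩ := P.exists_eq_mul_refl_of_ne_one hw hw1
  have IH {j : ι} (hj : P.length u < P.length (u * P.refl j)) : u (P.root j) ∈ P.posCone :=
    ih _ hut hu hj rfl
  have hti : t ≠ i := by
    rintro rfl
    rw [mul_assoc, refl_mul_self, mul_one] at hi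
    exact lt_asymm hut hi
  rw [LinearEquiv.mul_apply, refl_apply]
  rcases P.form_root_root t i hti with h0 | h1
  · rw [h0, zero_smul, sub_zero]
    exact IH (P.length_lt_of_commute hu h0 hut hi)
  · rw [h1, neg_one_smul, sub_neg_eq_add]
    rcases P.length_mul_refl hu i with hui | hui
    · rw [map_add]
      exact add_mem (IH (by omega)) (IH hut)
    · have hit : P.form (P.root i) (P.root t) = -1 := by rw [P.form_comm, h1]
      have : u (P.root i + P.root t) = (u * P.refl i) (P.root t) := by
        rw [LinearEquiv.mul_apply, refl_apply, hit, neg_one_smul, sub_neg_eq_add, add_comm]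
      rw [this]
      exact ih _ (by omega) (P.mul_refl_mem_range hu i)
        (P.length_lt_of_braid hu h1 hut hi (by omega)) rfl

theorem apply_root_mem_posCone_or_neg [FiniteDimensional 𝕜 V] {w : V ≃ₗ[𝕜] V}
    (hw : w ∈ Set.range P.wordProd) (i : ι) :
    w (P.root i) ∈ P.posCone ∨ -w (P.root i) ∈ P.posCone := by
  rcases P.length_mul_refl hw i with h | h
  · exact .inl (P.apply_root_mem_posCone hw (by omega))
  · have := P.apply_root_mem_posCone (P.mul_refl_mem_range hw i) (i := i)
      (by rw [mul_assoc, refl_mul_self, mul_one]; omega)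
    right
    rwa [LinearEquiv.mul_apply, refl_apply_root_self, map_neg] at this

lemma exists_coeff_of_mem_posCone [Fintype ι] {x : V} (hx : x ∈ P.posCone) :
    ∃ c : ι → 𝕜, (∀ i, 0 ≤ c i) ∧ ∑ i, c i • P.root i = x := by
  obtain ⟨c, rfl⟩ := (Submodule.mem_span_range_iff_exists_fun {c : 𝕜 // 0 ≤ c}).mp hx
  exact ⟨fun i => (c i : 𝕜), fun i => (c i).2, by simp only [Nonneg.coe_smul]⟩

lemma two_le_coeff_mul_form [Fintype ι] {x : V} {c : ι → 𝕜} (hc : ∀ i, 0 ≤ c i)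
    (hx : ∑ i, c i • P.root i = x) (hxx : P.form x x = 2) {j : ι}
    (hle : ∀ i ≠ j, P.form (P.root i) x ≤ 0) : 2 ≤ c j * P.form (P.root j) x := by
  classical
  have hexp : P.form x x = ∑ i, c i * P.form (P.root i) x := by
    nth_rw 1 [← hx]
    simp only [LinearMap.BilinForm.sum_left, LinearMap.BilinForm.smul_left]
  rw [← Finset.add_sum_erase _ _ (Finset.mem_univ j)] at hexp
  have hrest : ∑ i ∈ Finset.univ.erase j, c i * P.form (P.root i) x ≤ 0 :=
    Finset.sum_nonpos fun i hi =>
      mul_nonpos_of_nonneg_of_nonpos (hc i) (hle i (Finset.ne_of_mem_erase hi))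
  linarith

end Positivity

end SimplyLacedDatum

lemma ip_eq (n k : ℕ) (x y : Fin n → ℚ) :
    ip n k x y = x ⬝ᵥ y + (2 - k) / k ^ 2 * ((∑ i, x i) * ∑ i, y i) := by
  simp only [ip, qform, dotProduct, Pi.add_apply, add_sq, Finset.sum_add_distrib, mul_assoc,
    ← Finset.mul_sum]
  ring

lemma ip_comm (n k : ℕ) (x y : Fin n → ℚ) : ip n k x y = ip n k y x := by
  rw [ip_eq, ip_eq, dotProduct_comm, mul_comm (∑ i, x i)]

def ipForm (n k : ℕ) : LinearMap.BilinForm ℚ (Fin n → ℚ) :=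
  LinearMap.mk₂ ℚ (ip n k)
    (fun x y z => by
      simp only [ip_eq, add_dotProduct, Pi.add_apply, Finset.sum_add_distrib]; ring)
    (fun c x y => by
      simp only [ip_eq, smul_dotProduct, Pi.smul_apply, smul_eq_mul, ← Finset.mul_sum]; ring)
    (fun x y z => by
      simp only [ip_eq, dotProduct_add, Pi.add_apply, Finset.sum_add_distrib]; ring)
    (fun c x y => by
      simp only [ip_eq, dotProduct_smul, Pi.smul_apply, smul_eq_mul, ← Finset.mul_sum]; ring)

lemma sum_betaRoot {n k : ℕ} (hkn : k ≤ n) : ∑ i, betaRoot n k i = k := by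
  simp [betaRoot, Finset.sum_boole, Fin.card_filter_val_lt, hkn]

lemma ip_betaRoot {n k : ℕ} (hk : 1 ≤ k) (hkn : k ≤ n) (x : Fin n → ℚ) :
    ip n k (betaRoot n k) x =
      ∑ i ∈ Finset.univ.filter (fun i : Fin n => (i : ℕ) < k), x i + (2 - k) / k * ∑ i, x i := by
  have hk0 : (k : ℚ) ≠ 0 := by positivity
  rw [ip_eq, sum_betaRoot hkn, Finset.sum_filter]
  simp only [dotProduct, betaRoot, ite_mul, one_mul, zero_mul]
  field_simp

lemma rco_eq_neg_ip {n k : ℕ} (hk : 1 ≤ k) (hkn : k ≤ n) (x : Fin n → ℚ) :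
    rco n k x = -ip n k (betaRoot n k) x := by
  have hsplit := Finset.sum_filter_add_sum_filter_not Finset.univ (fun i : Fin n => (i : ℕ) < k) x
  simp only [not_lt] at hsplit
  have hk0 : (k : ℚ) ≠ 0 := by positivity
  rw [ip_betaRoot hk hkn, rco, degv]
  field_simp
  linear_combination (k : ℚ) * hsplit

lemma degv_neg (n k : ℕ) (x : Fin n → ℚ) : degv n k (-x) = -degv n k x := by
  simp [degv, neg_div]

lemma degv_sBeta {n k : ℕ} (hk : 1 ≤ k) (hkn : k ≤ n) (x : Fin n → ℚ) :
    degv n k (sBeta n k x) = degv n k x + rco n k x := by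
  have hk0 : (k : ℚ) ≠ 0 := by positivity
  simp only [degv, sBeta, Pi.add_apply, Pi.smul_apply, smul_eq_mul, Finset.sum_add_distrib,
    ← Finset.mul_sum, sum_betaRoot hkn]
  field_simp

def simpleRoot (m k : ℕ) : Option (Fin m) → Fin (m + 1) → ℚ
  | none => betaRoot (m + 1) k
  | some j => Pi.single j.succ 1 - Pi.single j.castSucc 1

lemma ip_simpleRoot_some (m k : ℕ) (j : Fin m) (x : Fin (m + 1) → ℚ) :
    ip (m + 1) k (simpleRoot m k (some j)) x = x j.succ - x j.castSucc := by
  simp [ip_eq, simpleRoot, sub_dotProduct, Finset.sum_sub_distrib]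

lemma ip_simpleRoot_self {m k : ℕ} (hk : 1 ≤ k) (hkm : k ≤ m + 1) (i : Option (Fin m)) :
    ip (m + 1) k (simpleRoot m k i) (simpleRoot m k i) = 2 := by
  cases i with
  | none =>
    have hk0 : (k : ℚ) ≠ 0 := by positivity
    rw [simpleRoot, ip_betaRoot hk hkm, Finset.sum_filter_of_ne (by simp [betaRoot]),
      sum_betaRoot hkm]
    field_simp
    ring
  | some j =>
    rw [ip_simpleRoot_some]
    norm_num [simpleRoot, Fin.ext_iff]

lemma betaRoot_succ_sub_castSucc (m k : ℕ) (j : Fin m) :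
    betaRoot (m + 1) k j.succ - betaRoot (m + 1) k j.castSucc = 0 ∨
      betaRoot (m + 1) k j.succ - betaRoot (m + 1) k j.castSucc = -1 := by
  simp only [betaRoot, Fin.val_succ, Fin.val_castSucc]
  split_ifs <;> first | omega | norm_num

lemma ip_simpleRoot_simpleRoot (m k : ℕ) {i j : Option (Fin m)} (hij : i ≠ j) :
    ip (m + 1) k (simpleRoot m k i) (simpleRoot m k j) = 0 ∨
      ip (m + 1) k (simpleRoot m k i) (simpleRoot m k j) = -1 := by
  rcases i with _ | i <;> rcases j with _ | j
  · exact absurd rfl hij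
  · rw [ip_comm, ip_simpleRoot_some]
    exact betaRoot_succ_sub_castSucc m k j
  · rw [ip_simpleRoot_some]
    exact betaRoot_succ_sub_castSucc m k i
  · have hij : (j : ℕ) ≠ i := fun h => hij (congrArg some (Fin.ext h.symm))
    rw [ip_comm, ip_simpleRoot_some]
    simp only [simpleRoot, Pi.sub_apply, Pi.single_apply, Fin.ext_iff, Fin.val_succ,
      Fin.val_castSucc]
    split_ifs <;> first | omega | norm_num


lemma degv_sum_smul_simpleRoot {m k : ℕ} (hk : 1 ≤ k) (hkm : k ≤ m + 1)
    (c : Option (Fin m) → ℚ) : degv (m + 1) k (∑ i, c i • simpleRoot m k i) = c none := by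
  have hk0 : (k : ℚ) ≠ 0 := by positivity
  simp only [degv, Finset.sum_apply, Pi.smul_apply, smul_eq_mul]
  rw [Finset.sum_comm]
  simp only [simpleRoot, ← Finset.mul_sum, Fintype.sum_option, sum_betaRoot hkm, Pi.sub_apply,
    Finset.sum_sub_distrib, Finset.sum_pi_single', Finset.mem_univ, if_true, sub_self, mul_zero,
    Finset.sum_const_zero, add_zero]
  field_simp

def weylDatum {m k : ℕ} (hk : 1 ≤ k) (hkm : k ≤ m + 1) :
    SimplyLacedDatum ℚ (Fin (m + 1) → ℚ) (Option (Fin m)) where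
  form := ipForm (m + 1) k
  root := simpleRoot m k
  form_comm := ip_comm (m + 1) k
  form_root_self := ip_simpleRoot_self hk hkm
  form_root_root _ _ := ip_simpleRoot_simpleRoot m k

lemma sBeta_eq_weylDatum_refl {m k : ℕ} (hk : 1 ≤ k) (hkm : k ≤ m + 1) :
    sBeta (m + 1) k = (weylDatum hk hkm).refl none := by
  funext x
  rw [SimplyLacedDatum.refl_apply, sBeta, rco_eq_neg_ip hk hkm, neg_smul, ← sub_eq_add_neg]
  rfl

lemma sSwap_eq_weylDatum_refl {m k : ℕ} (hk : 1 ≤ k) (hkm : k ≤ m + 1) (j : Fin m) :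
    sSwap (m + 1) j.castSucc j.succ = (weylDatum hk hkm).refl (some j) := by
  funext x i
  rw [SimplyLacedDatum.refl_apply]
  change _ = x i - (ip (m + 1) k (simpleRoot m k (some j)) x • simpleRoot m k (some j)) i
  rw [ip_simpleRoot_some]
  have hne := (Fin.castSucc_lt_succ (i := j)).ne
  by_cases h₁ : i = j.castSucc
  · subst h₁
    simp [sSwap, simpleRoot, hne]
  by_cases h₂ : i = j.succ
  · subst h₂
    simp [sSwap, simpleRoot, hne.symm]
  simp [sSwap, simpleRoot, Equiv.swap_apply_of_ne_of_ne h₁ h₂, h₁, h₂]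

lemma exists_wordProd_of_mem_weyl {m k : ℕ} (hk : 1 ≤ k) (hkm : k ≤ m + 1)
    {σ : Equiv.Perm (Fin (m + 1) → ℚ)} (hσ : σ ∈ weyl (m + 1) k) :
    ∃ l, MulAction.toPermHom _ _ ((weylDatum hk hkm).wordProd l) = σ := by
  induction hσ using Subgroup.closure_induction with
  | mem σ hσ =>
    rcases hσ with h | ⟨a, b, hab, h⟩
    · refine ⟨[none], Equiv.ext fun x => ?_⟩
      simp [h, sBeta_eq_weylDatum_refl hk hkm, LinearEquiv.smul_def]
    · obtain ⟨j, rfl, rfl⟩ : ∃ j : Fin m, j.castSucc = a ∧ j.succ = b :=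
        ⟨⟨a, by omega⟩, Fin.ext rfl, Fin.ext (by simp [hab])⟩
      refine ⟨[some j], Equiv.ext fun x => ?_⟩
      simp [h, sSwap_eq_weylDatum_refl hk hkm, LinearEquiv.smul_def]
  | one => exact ⟨[], map_one _⟩
  | mul σ τ _ _ hσ hτ =>
    obtain ⟨l, rfl⟩ := hσ
    obtain ⟨l', rfl⟩ := hτ
    exact ⟨l ++ l', by rw [SimplyLacedDatum.wordProd_append, map_mul]⟩
  | inv σ _ hσ =>
    obtain ⟨l, rfl⟩ := hσ
    exact ⟨l.reverse, by rw [SimplyLacedDatum.wordProd_reverse, map_inv]⟩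

lemma exists_wordProd_apply_of_mem_realRoots {m k : ℕ} (hk : 1 ≤ k) (hkm : k ≤ m + 1)
    {x : Fin (m + 1) → ℚ} (hx : x ∈ realRoots (m + 1) k) :
    ∃ w ∈ Set.range (weylDatum hk hkm).wordProd, w ((weylDatum hk hkm).root none) = x := by
  obtain ⟨σ, hσ, rfl⟩ := hx
  obtain ⟨l, rfl⟩ := exists_wordProd_of_mem_weyl hk hkm hσ
  exact ⟨_, ⟨l, rfl⟩, rfl⟩

lemma weylDatum_apply_root_none_mem_posCone {m k : ℕ} (hk : 1 ≤ k) (hkm : k ≤ m + 1)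
    {w : (Fin (m + 1) → ℚ) ≃ₗ[ℚ] Fin (m + 1) → ℚ} (hw : w ∈ Set.range (weylDatum hk hkm).wordProd)
    (hd : 0 < degv (m + 1) k (w ((weylDatum hk hkm).root none))) :
    w ((weylDatum hk hkm).root none) ∈ (weylDatum hk hkm).posCone := by
  refine ((weylDatum hk hkm).apply_root_mem_posCone_or_neg hw none).resolve_right fun hneg => ?_
  obtain ⟨c, hc, hcx⟩ := (weylDatum hk hkm).exists_coeff_of_mem_posCone hneg
  have := degv_sum_smul_simpleRoot hk hkm c
  rw [show ∑ i, c i • simpleRoot m k i = _ from hcx, degv_neg] at this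
  linarith [hc none]

lemma weylDatum_form_root_nonpos_of_antitone {m k : ℕ} (hk : 1 ≤ k) (hkm : k ≤ m + 1)
    {x : Fin (m + 1) → ℚ} (hx : Antitone x) :
    ∀ i ≠ none, (weylDatum hk hkm).form ((weylDatum hk hkm).root i) x ≤ 0
  | none, h => absurd rfl h
  | some j, _ => by
    change ip (m + 1) k (simpleRoot m k (some j)) x ≤ 0
    rw [ip_simpleRoot_some]
    exact sub_nonpos.mpr (hx (Fin.castSucc_le_succ j))

theorem sBeta_lowers_degree_of_sorted_real_root_general (n k : ℕ) (hk : 1 ≤ k)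
    (hkn : k < n) (x : Fin n → ℚ) (hx : x ∈ realRoots n k) (hd : 1 ≤ degv n k x)
    (hmono : Antitone x) :
    degv n k (sBeta n k x) < degv n k x := by
  obtain ⟨m, rfl⟩ : ∃ m, n = m + 1 := ⟨n - 1, by omega⟩
  set P := weylDatum hk hkn.le
  obtain ⟨w, hw, rfl⟩ := exists_wordProd_apply_of_mem_realRoots hk hkn.le hx
  obtain ⟨c, hc, hcx⟩ := P.exists_coeff_of_mem_posCone
    (weylDatum_apply_root_none_mem_posCone hk hkn.le hw (by linarith))
  have hdeg : degv (m + 1) k (w (P.root none)) = c none :=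
    hcx ▸ degv_sum_smul_simpleRoot hk hkn.le c
  have h2 : 2 ≤ c none * ip (m + 1) k (betaRoot (m + 1) k) (w (P.root none)) :=
    P.two_le_coeff_mul_form hc hcx (P.form_apply_root_self hw none)
      (weylDatum_form_root_nonpos_of_antitone hk hkn.le hmono)
  rw [degv_sBeta hk hkn.le, rco_eq_neg_ip hk hkn.le]
  nlinarith

theorem sBeta_lowers_degree_of_sorted_real_root (n k : ℕ) (hn : 2 ≤ n) (hk : 1 ≤ k)
    (hkn : k < n) (x : Fin n → ℚ) (hx : x ∈ realRoots n k) (hd : 1 ≤ degv n k x)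
    (hmono : Antitone x) :
    degv n k (sBeta n k x) < degv n k x :=
  sBeta_lowers_degree_of_sorted_real_root_general n k hk hkn x hx hd hmono
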